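/- arXiv:math/9502230 — 4 statements merged into one kernel-verified Lean document; each statement's English description precedes it below -/
import Mathlib

section
/- If a partial order P of cardinality κ (infinite) is such that for all α < κ one can choose pairwise distinct conditions densely, then there exists a family ⟨D_γ : γ < κ⟩ of pairwise disjoint dense subsets of P. More precisely: if P is a separative partial order of uniform density κ and D ⊆ P is dense, then D can be partitioned into κ many pairwise disjoint dense subsets of P. -/
universe u

/-- if `P` has uniform density `κ` and `D ⊆ P` is dense then there is a family of
`κ` many pairwise disjoint subsets of `P`, each dense in `P`. -/
theorem dense_set_splits_into_kappa_dense_sets {P : Type u} [PartialOrder P]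
    (κ : Cardinal.{u}) (hκ : Cardinal.aleph0 ≤ κ)
    (hcard : Cardinal.mk P = κ)
    (hud : ∀ p : P, ∀ R : Set P, Cardinal.mk R < κ → ¬ (∀ q ≤ p, ∃ r ∈ R, r ≤ q))
    (D : Set P) (hD : ∀ p : P, ∃ d ∈ D, d ≤ p)
    (ι : Type u) (hι : Cardinal.mk ι = κ) :
    ∃ Dfam : ι → Set P, (∀ γ, Dfam γ ⊆ D) ∧
      (∀ γ γ', γ ≠ γ' → Disjoint (Dfam γ) (Dfam γ')) ∧
      ∀ γ, ∀ p : P, ∃ d ∈ Dfam γ, d ≤ p := by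
  classical
  -- For every `p`, the set of elements of `D` below `p` has cardinality at least `κ`.
  have key : ∀ p : P, ¬ (Cardinal.mk {d : P | d ∈ D ∧ d ≤ p} < κ) := by
    intro p hlt
    refine hud p {d | d ∈ D ∧ d ≤ p} hlt ?_
    intro q hq
    obtain ⟨d, hdD, hdq⟩ := hD q
    exact ⟨d, ⟨hdD, le_trans hdq hq⟩, hdq⟩
  set T := κ.ord.ToType with hT
  obtain ⟨e⟩ : Nonempty (T ≃ ι × P) := by
    rw [← Cardinal.eq, Cardinal.mk_ord_toType, Cardinal.mk_prod, Cardinal.lift_id,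
      Cardinal.lift_id, hι, hcard, Cardinal.mul_eq_self hκ]
  have wf : WellFounded ((· < ·) : T → T → Prop) := wellFounded_lt
  -- At each stage there is a fresh element of `D` below the prescribed condition.
  have hex : ∀ (x : T) (g : ∀ y, y < x → P),
      ∃ d : P, d ∈ D ∧ d ≤ (e x).2 ∧ ∀ y (hy : y < x), g y hy ≠ d := by
    intro x g
    by_contra hne
    push_neg at hne
    apply key (e x).2
    choose yfun hyfun heq using fun (d : {d : P | d ∈ D ∧ d ≤ (e x).2}) =>
      hne d d.2.1 d.2.2
    have hinj : Function.Injective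
        (fun d : {d : P | d ∈ D ∧ d ≤ (e x).2} => (⟨yfun d, hyfun d⟩ : Set.Iio x)) := by
      intro d d' h
      have hy : yfun d = yfun d' := congrArg Subtype.val h
      have h1 := heq d
      have h2 := heq d'
      apply Subtype.ext
      rw [← h1, ← h2]
      congr 1
    calc Cardinal.mk {d : P | d ∈ D ∧ d ≤ (e x).2}
        ≤ Cardinal.mk (Set.Iio x) := Cardinal.mk_le_of_injective hinj
      _ < κ := Cardinal.mk_Iio_ord_toType x
  let F : ∀ x : T, (∀ y, y < x → P) → P := fun x g => (hex x g).choose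
  let f : T → P := wf.fix F
  have hfeq : ∀ x, f x = F x (fun y _ => f y) := fun x => wf.fix_eq F x
  have hf : ∀ x, f x ∈ D ∧ f x ≤ (e x).2 ∧ ∀ y, y < x → f y ≠ f x := by
    intro x
    rw [hfeq x]
    exact (hex x (fun y _ => f y)).choose_spec
  have hfinj : Function.Injective f := by
    intro x y h
    rcases lt_trichotomy x y with hxy | hxy | hxy
    · exact absurd h ((hf y).2.2 x hxy)
    · exact hxy
    · exact absurd h.symm ((hf x).2.2 y hxy)
  refine ⟨fun γ => f '' {x | (e x).1 = γ}, ?_, ?_, ?_⟩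
  · rintro γ d ⟨x, -, rfl⟩
    exact (hf x).1
  · intro γ γ' hne
    rw [Set.disjoint_left]
    rintro d ⟨x, hx, rfl⟩ ⟨x', hx', hx'eq⟩
    exact hne (hx ▸ hfinj hx'eq ▸ hx')
  · intro γ p
    refine ⟨f (e.symm (γ, p)), ⟨e.symm (γ, p), ?_, rfl⟩, ?_⟩
    · simp
    · have := (hf (e.symm (γ, p))).2.1
      rwa [e.apply_symm_apply] at this
end

section
/- Let ⟨κ_n : n < ω⟩ be an increasing sequence of regular cardinals and let ⟨f_β : β < λ⟩ be a sequence in ∏_n κ_n that is increasing and cofinal modulo finite, where λ > sup_n κ_n is regular. Then there exist ordinals β₀ < β₁ < λ such that f_{β₀}(n) ≤ f_{β₁}(n) for all n < ω (everywhere domination, not just modulo finite). -/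
open Cardinal Ordinal Set

/-- Every sequence of ordinals has a monotone subsequence. -/
private lemma mono_subseq (g : ℕ → Ordinal) :
    ∃ φ : ℕ → ℕ, StrictMono φ ∧ ∀ a b : ℕ, a ≤ b → g (φ a) ≤ g (φ b) := by
  have hPWO : (Set.univ : Set Ordinal).IsPWO := (Set.isWF_univ_iff.2 ⟨Ordinal.lt_wf⟩).isPWO
  obtain ⟨φ, hφ⟩ := hPWO.exists_monotone_subseq (f := g) (fun n => Set.mem_univ _)
  exact ⟨φ, φ.strictMono, hφ⟩

/-- Dickson-type lemma: a simultaneous monotone subsequence in finitely many coordinates. -/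
private lemma mono_subseq_tuple :
    ∀ (N : ℕ) (g : ℕ → ℕ → Ordinal), ∃ φ : ℕ → ℕ, StrictMono φ ∧
      ∀ n, n < N → ∀ a b : ℕ, a ≤ b → g (φ a) n ≤ g (φ b) n := by
  intro N
  induction N with
  | zero => exact fun g => ⟨id, strictMono_id, fun n hn => absurd hn (Nat.not_lt_zero n)⟩
  | succ M ih =>
    intro g
    obtain ⟨φ₁, h₁m, h₁⟩ := ih g
    obtain ⟨φ₂, h₂m, h₂⟩ := mono_subseq (fun r => g (φ₁ r) M)
    refine ⟨φ₁ ∘ φ₂, h₁m.comp h₂m, ?_⟩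
    intro n hn a b hab
    rcases Nat.lt_or_ge n M with h | h
    · exact h₁ n h _ _ (h₂m.monotone hab)
    · have hnM : n = M := by omega
      subst hnM
      exact h₂ a b hab

/-- From an unbounded family below a limit ordinal, extract a strictly increasing ω-sequence. -/
private lemma exists_mono_seq {W : Ordinal} (P : Ordinal → Prop) (h0 : 0 < W)
    (hsucc : ∀ x, x < W → x + 1 < W)
    (h : ∀ b, b < W → ∃ ξ, b ≤ ξ ∧ ξ < W ∧ P ξ) :
    ∃ Z : ℕ → Ordinal, StrictMono Z ∧ ∀ r, Z r < W ∧ P (Z r) := by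
  choose g h1 h2 h3 using h
  let Z : ℕ → {x : Ordinal // x < W} := fun r =>
    Nat.rec ⟨g 0 h0, h2 0 h0⟩ (fun _ p => ⟨g (p.1 + 1) (hsucc p.1 p.2), h2 _ _⟩) r
  have hstep : ∀ r, (Z r).1 < (Z (r + 1)).1 := by
    intro r
    have hE : Z (r + 1) = ⟨g ((Z r).1 + 1) (hsucc _ (Z r).2), h2 _ _⟩ := rfl
    rw [hE]
    calc (Z r).1 < (Z r).1 + 1 := by
          rw [Ordinal.add_one_eq_succ]; exact Order.lt_succ _
      _ ≤ g ((Z r).1 + 1) _ := h1 _ _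
  refine ⟨fun r => (Z r).1, strictMono_nat_of_lt_succ hstep, fun r => ⟨(Z r).2, ?_⟩⟩
  cases r with
  | zero => exact h3 0 h0
  | succ m => exact h3 _ _

/-- Lemma 42: if `⟨f_β : β < λ⟩` is a modulo-finite increasing and cofinal
sequence in `∏ₙ κₙ`, with the `κₙ` increasing regular and `λ > sup κₙ` regular, then there
are `β₀ < β₁ < λ` with `f_{β₀}(n) ≤ f_{β₁}(n)` for all `n`. -/
theorem exists_everywhere_dominating_pair (κ : ℕ → Cardinal) (hmono : StrictMono κ)
    (hreg : ∀ n, (κ n).IsRegular)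
    (lam : Cardinal) (hlamreg : lam.IsRegular) (hlam : (⨆ n, κ n) < lam)
    (f : Ordinal → ℕ → Ordinal)
    (hval : ∀ β < lam.ord, ∀ n, f β n < (κ n).ord)
    (hinc : ∀ β γ : Ordinal, β < γ → γ < lam.ord → ∃ N, ∀ n ≥ N, f β n < f γ n)
    (hcof : ∀ g : ℕ → Ordinal, (∀ n, g n < (κ n).ord) →
      ∃ β < lam.ord, ∃ N, ∀ n ≥ N, g n < f β n) :
    ∃ β₀ β₁ : Ordinal, β₀ < β₁ ∧ β₁ < lam.ord ∧ ∀ n, f β₀ n ≤ f β₁ n := by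
  classical
  -- Basic facts
  have haleph0lam : ℵ₀ < lam :=
    lt_of_le_of_lt ((hreg 0).aleph0_le.trans (le_ciSup (Cardinal.bddAbove_range κ) 0)) hlam
  have hΛlim : Order.IsSuccLimit lam.ord := Cardinal.isSuccLimit_ord (le_of_lt haleph0lam)
  set W : Ordinal := (Cardinal.aleph 1).ord with hWdef
  have hWlim : Order.IsSuccLimit W := Cardinal.isSuccLimit_ord (le_of_lt Cardinal.aleph0_lt_aleph_one)
  have hcardW : ∀ ξ, ξ < W → ξ.card ≤ ℵ₀ := by
    intro ξ hξ
    have h1 : ξ.card < Cardinal.aleph 1 := Cardinal.lt_ord.1 hξ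
    rwa [← Cardinal.succ_aleph0, Order.lt_succ_iff] at h1
  -- Define the chain `D` by transfinite recursion with choice
  obtain ⟨D, hD⟩ : ∃ D : Ordinal → Ordinal, ∀ ξ, D ξ =
      if h : ∃ δ, δ < lam.ord ∧ (∀ η, η < ξ → D η < δ) ∧
          ∃ N : ℕ, ∀ n : ℕ, N ≤ n → ∀ η, η < ξ → f (D η) n < f δ n
      then h.choose else 0 := by
    refine ⟨WellFounded.fix Ordinal.lt_wf (fun ξ IH =>
      if h : ∃ δ, δ < lam.ord ∧ (∀ η (hη : η < ξ), IH η hη < δ) ∧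
          ∃ N : ℕ, ∀ n : ℕ, N ≤ n → ∀ η (hη : η < ξ), f (IH η hη) n < f δ n
      then h.choose else 0), fun ξ => ?_⟩
    exact WellFounded.fix_eq _ _ _
  -- Stage existence
  have hstage : ∀ ξ, ξ < W → (∀ η, η < ξ → D η < lam.ord) →
      ∃ δ, δ < lam.ord ∧ (∀ η, η < ξ → D η < δ) ∧
        ∃ N : ℕ, ∀ n : ℕ, N ≤ n → ∀ η, η < ξ → f (D η) n < f δ n := by
    intro ξ hξW hprev
    have hξcard : ξ.card ≤ ℵ₀ := hcardW ξ hξW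
    set h : ℕ → Ordinal := fun n =>
      if n = 0 then 0 else Ordinal.bsup.{u_1,u_1} ξ (fun η _ => f (D η) n + 1) with hhdef
    have hhlt : ∀ n, h n < (κ n).ord := by
      intro n
      cases n with
      | zero =>
        simpa [hhdef] using (Cardinal.isSuccLimit_ord (hreg 0).aleph0_le).pos
      | succ m =>
        have hEq : h (m + 1) = Ordinal.bsup.{u_1,u_1} ξ (fun η _ => f (D η) (m + 1) + 1) := by
          simp [hhdef]
        rw [hEq]
        refine Cardinal.bsup_lt_ord_of_isRegular (hreg (m + 1)) (hξcard.trans_lt ?_) ?_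
        · exact lt_of_le_of_lt (hreg 0).aleph0_le (hmono (Nat.succ_pos m))
        · intro η hη
          have hlt := hval (D η) (hprev η hη) (m + 1)
          rw [Ordinal.add_one_eq_succ]
          exact (Cardinal.isSuccLimit_ord (hreg (m + 1)).aleph0_le).succ_lt hlt
    obtain ⟨ε, hεΛ, N₁, hN₁⟩ := hcof h hhlt
    set σ : Ordinal := Ordinal.bsup.{u_1,u_1} ξ (fun η _ => D η) with hσdef
    have hσΛ : σ < lam.ord :=
      Cardinal.bsup_lt_ord_of_isRegular hlamreg (hξcard.trans_lt haleph0lam)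
        (fun η hη => hprev η hη)
    have hδΛ : max ε σ + 1 < lam.ord := by
      rw [Ordinal.add_one_eq_succ]
      exact hΛlim.succ_lt (max_lt hεΛ hσΛ)
    have hlt1 : ∀ x : Ordinal, x < x + 1 := by
      intro x; rw [Ordinal.add_one_eq_succ]; exact Order.lt_succ _
    have hεδ : ε < max ε σ + 1 := lt_of_le_of_lt (le_max_left _ _) (hlt1 _)
    obtain ⟨T, hT⟩ := hinc ε (max ε σ + 1) hεδ hδΛ
    refine ⟨max ε σ + 1, hδΛ, ?_, ?_⟩
    · intro η hη
      exact lt_of_le_of_lt ((Ordinal.le_bsup _ η hη).trans (le_max_right ε σ)) (hlt1 _)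
    · refine ⟨max (max N₁ T) 1, ?_⟩
      intro n hn η hη
      have hn1 : 1 ≤ n := le_trans (le_max_right _ _) hn
      have hnN : N₁ ≤ n := le_trans ((le_max_left _ _).trans (le_max_left _ _)) hn
      have hnT : T ≤ n := le_trans ((le_max_right _ _).trans (le_max_left _ _)) hn
      have hfh : f (D η) n < h n := by
        have hne : ¬(n = 0) := by omega
        have hEq : h n = Ordinal.bsup.{u_1,u_1} ξ (fun η _ => f (D η) n + 1) := by
          simp [hhdef, hne]
        rw [hEq]
        exact lt_of_lt_of_le (hlt1 _) (Ordinal.le_bsup _ η hη)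
      exact hfh.trans ((hN₁ n hnN).trans (hT n hnT))
  -- All members of the chain are below `lam.ord`
  have hDlt : ∀ ξ, ξ < W → D ξ < lam.ord := by
    intro ξ
    induction ξ using Ordinal.induction with
    | h ξ IH =>
      intro hξW
      have hE := hstage ξ hξW (fun η hη => IH η hη (hη.trans hξW))
      rw [hD ξ, dif_pos hE]
      exact hE.choose_spec.1
  -- The chain is increasing with a uniform threshold over all predecessors
  have hspec : ∀ ξ, ξ < W → (∀ η, η < ξ → D η < D ξ) ∧
      ∃ N : ℕ, ∀ n : ℕ, N ≤ n → ∀ η, η < ξ → f (D η) n < f (D ξ) n := by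
    intro ξ hξW
    have hE := hstage ξ hξW (fun η hη => hDlt η (hη.trans hξW))
    rw [hD ξ, dif_pos hE]
    exact ⟨hE.choose_spec.2.1, hE.choose_spec.2.2⟩
  -- Extract the threshold function
  have hNex : ∀ ξ : Ordinal, ∃ N : ℕ, ξ < W →
      ∀ n : ℕ, N ≤ n → ∀ η, η < ξ → f (D η) n < f (D ξ) n := by
    intro ξ
    by_cases hξ : ξ < W
    · obtain ⟨N, hN⟩ := (hspec ξ hξ).2
      exact ⟨N, fun _ => hN⟩
    · exact ⟨0, fun hc => absurd hc hξ⟩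
  choose Nf hNf using hNex
  -- Pigeonhole: some threshold value is attained unboundedly often below ω₁
  have hpig : ∃ Ns : ℕ, ∀ b, b < W → ∃ ξ, b ≤ ξ ∧ ξ < W ∧ Nf ξ = Ns := by
    by_contra hcon
    push_neg at hcon
    choose b hbW hb using hcon
    have hsup : (⨆ i, b i) < W := by
      have hb' : ∀ i, b i < (Cardinal.aleph 1).ord := by
        intro i; have h2 := hbW i; rwa [hWdef] at h2
      have h3 := Cardinal.iSup_lt_ord_lift_of_isRegular (f := b)
        Cardinal.isRegular_aleph_one
        (by rw [Cardinal.mk_nat, Cardinal.lift_aleph0]; exact Cardinal.aleph0_lt_aleph_one) hb'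
      rwa [← hWdef] at h3
    exact hb (Nf (⨆ i, b i)) (⨆ i, b i)
      (le_ciSup (Ordinal.bddAbove_range b) (Nf (⨆ i, b i))) hsup rfl
  obtain ⟨Ns, hNs⟩ := hpig
  -- Extract a strictly increasing ω-sequence with constant threshold
  obtain ⟨Z, hZmono, hZ⟩ := exists_mono_seq (fun ξ => Nf ξ = Ns) hWlim.pos
    (fun x hx => by rw [Ordinal.add_one_eq_succ]; exact hWlim.succ_lt hx) hNs
  -- Dickson: find a pair monotone on the first `Ns` coordinates
  obtain ⟨φ, hφmono, hφ⟩ := mono_subseq_tuple Ns (fun r n => f (D (Z r)) n)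
  have hZlt : Z (φ 0) < Z (φ 1) := hZmono (hφmono Nat.zero_lt_one)
  have hW1 : Z (φ 1) < W := (hZ (φ 1)).1
  refine ⟨D (Z (φ 0)), D (Z (φ 1)), ?_, ?_, ?_⟩
  · exact (hspec (Z (φ 1)) hW1).1 (Z (φ 0)) hZlt
  · exact hDlt _ hW1
  · intro n
    rcases Nat.lt_or_ge n Ns with hn | hn
    · exact hφ n hn 0 1 (Nat.zero_le 1)
    · refine le_of_lt (hNf (Z (φ 1)) hW1 n ?_ (Z (φ 0)) hZlt)
      rw [(hZ (φ 1)).2]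
      exact hn
end

section
/- Let T be a subtree of ⋃_m ∏_{n<m} κ_n for an increasing sequence of regular cardinals ⟨κ_n⟩, closed under initial segments, and for s ∈ T define A(s,0) = {t ∈ T : s ⊆ t, length(t) = length(s)+1} and A(s,n+1) = {t ∈ T : s ⊆ t, length(t) = length(s)+1, |A(t,n)| = κ_{length(t)}}. Suppose that T is the tree of finite initial segments of a <*-cofinal family of functions of size λ > sup κ_n regular, i.e. T = {s : |{β ∈ S : s ⊆ f_β}| = λ} for a cofinal modulo-finite-increasing family ⟨f_β : β ∈ S⟩ with |S| = λ. Then there exists s ∈ T such that |A(s,n)| = κ_{length(s)} for all n < ω. -/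
universe u

open Cardinal Set

private lemma claim45_getD_take' {s : List Ordinal.{u}} {n i : ℕ}
    (hi : i < (s.take n).length) : (s.take n).getD i 0 = s.getD i 0 := by
  have h2 : i < s.length := by rw [List.length_take] at hi; omega
  rw [List.getD_eq_getElem _ 0 hi, List.getD_eq_getElem _ 0 h2]
  simp [List.getElem_take]

private lemma claim45_isRegular_lift {c : Cardinal.{u}} (h : c.IsRegular) :
    (Cardinal.lift.{u+1} c).IsRegular := by
  constructor
  · simpa using h.1
  · rw [← Cardinal.lift_ord, ← Ordinal.lift_cof]
    exact Cardinal.lift_le.2 h.2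

private lemma claim45_bounded {c : Cardinal.{u}} (hc : c.IsRegular) (X : Set Ordinal.{u})
    (hX : ∀ o ∈ X, o < c.ord) (hcard : Cardinal.mk X < Cardinal.lift.{u+1} c) :
    ∃ b, b < c.ord ∧ ∀ o ∈ X, o < b := by
  classical
  set e := Ordinal.ToType.mk (o := c.ord) with he
  set X' : Set c.ord.ToType := {x | ((e.symm x : Set.Iio c.ord) : Ordinal) ∈ X} with hX'
  set F : X' → Ordinal.{u} := fun x => ((e.symm x.1 : Set.Iio c.ord) : Ordinal) with hF
  have key : ∀ o ∈ X, ∃ x : X', F x = o := by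
    intro o ho
    refine ⟨⟨e ⟨o, hX o ho⟩, ?_⟩, ?_⟩
    · show ((e.symm (e ⟨o, hX o ho⟩) : Set.Iio c.ord) : Ordinal) ∈ X
      simpa using ho
    · show ((e.symm (e ⟨o, hX o ho⟩) : Set.Iio c.ord) : Ordinal) = o
      simp
  have hFinj : Function.Injective F := by
    intro x y hxy
    apply Subtype.ext
    have : e.symm x.1 = e.symm y.1 := Subtype.ext hxy
    exact e.symm.injective this
  have hX'card : Cardinal.mk X' < c := by
    have hGinj : Function.Injective (fun x : X' => (⟨F x, x.2⟩ : X)) := by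
      intro x y hxy
      simp only [Subtype.mk.injEq] at hxy
      exact hFinj hxy
    have h1 : Cardinal.lift.{u+1} (Cardinal.mk X') ≤ Cardinal.lift.{u} (Cardinal.mk X) :=
      Cardinal.lift_mk_le.{0, u, u+1}.mpr ⟨⟨_, hGinj⟩⟩
    rw [Cardinal.lift_id'.{u, u+1}] at h1
    exact Cardinal.lift_lt.mp (lt_of_le_of_lt h1 hcard)
  have hsup : (⨆ x, F x) < c.ord :=
    Cardinal.iSup_lt_ord_of_isRegular hc hX'card (fun x => (e.symm x.1).2)
  refine ⟨(⨆ x, F x) + 1, ?_, fun o ho => ?_⟩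
  · rw [Ordinal.add_one_eq_succ]
    exact (Cardinal.isSuccLimit_ord hc.1).succ_lt hsup
  · obtain ⟨x, hx⟩ := key o ho
    have : o ≤ ⨆ x, F x := hx ▸ le_ciSup (Ordinal.bddAbove_range F) x
    exact lt_of_le_of_lt this (lt_add_one _)

private lemma claim45_take_concat {s : List Ordinal.{u}} {n : ℕ} (h : s.length = n + 1) :
    s.take n ++ [s.getD n 0] = s := by
  have hn : n < s.length := by omega
  rw [List.getD_eq_getElem s 0 hn]
  conv_rhs => rw [← List.take_append_drop n s]
  congr 1
  rw [List.drop_eq_getElem_cons hn]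
  have : s.drop (n+1) = [] := List.drop_eq_nil_of_le (by omega)
  rw [this]

private lemma claim45_getD_take {s : List Ordinal.{u}} {n i : ℕ} (hi : i < n)
    (hn : n ≤ s.length) : (s.take n).getD i 0 = s.getD i 0 := by
  have h1 : i < (s.take n).length := by rw [List.length_take]; omega
  rw [List.getD_eq_getElem _ 0 h1, List.getD_eq_getElem _ 0 (show i < s.length by omega)]
  simp [List.getElem_take]

private lemma claim45_mk_level (κ : ℕ → Cardinal.{u}) (hmono : StrictMono κ)
    (hreg : ∀ n, (κ n).IsRegular) (n : ℕ) :
    Cardinal.mk {s : List Ordinal.{u} | s.length = n ∧ ∀ i < n, s.getD i 0 < (κ i).ord}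
      < Cardinal.lift.{u+1} (κ n) := by
  induction n with
  | zero =>
    have hsub : {s : List Ordinal.{u} | s.length = 0 ∧ ∀ i < 0, s.getD i 0 < (κ i).ord}
        ⊆ {([] : List Ordinal.{u})} := by
      rintro s ⟨hs, -⟩
      simp [List.length_eq_zero_iff.mp hs]
    calc Cardinal.mk {s : List Ordinal.{u} | s.length = 0 ∧ ∀ i < 0, s.getD i 0 < (κ i).ord}
        ≤ Cardinal.mk ({([] : List Ordinal.{u})} : Set (List Ordinal.{u})) :=
          Cardinal.mk_le_mk_of_subset hsub
      _ = 1 := Cardinal.mk_singleton _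
      _ < Cardinal.lift.{u+1} (κ 0) := by
          have : (ℵ₀ : Cardinal.{u+1}) ≤ Cardinal.lift.{u+1} (κ 0) := by simpa using (hreg 0).1
          exact lt_of_lt_of_le Cardinal.one_lt_aleph0 this
  | succ n ih =>
    set W : Set (List Ordinal.{u}) :=
      {s | s.length = n ∧ ∀ i < n, s.getD i 0 < (κ i).ord} with hWdef
    set W' : Set (List Ordinal.{u}) :=
      {s | s.length = n + 1 ∧ ∀ i < n + 1, s.getD i 0 < (κ i).ord} with hW'def
    have hinj : ∃ F : W' → W × Set.Iio ((κ n).ord), Function.Injective F := by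
      refine ⟨fun s => ⟨⟨s.1.take n, ?_, ?_⟩, ⟨s.1.getD n 0, s.2.2 n (Nat.lt_succ_self n)⟩⟩, ?_⟩
      · rw [List.length_take, s.2.1]; omega
      · intro i hi
        rw [claim45_getD_take hi (by rw [s.2.1]; omega)]
        exact s.2.2 i (by omega)
      · rintro ⟨s, hs⟩ ⟨t, ht⟩ heq
        simp only [Prod.mk.injEq, Subtype.mk.injEq] at heq
        apply Subtype.ext
        show s = t
        rw [← claim45_take_concat hs.1, ← claim45_take_concat ht.1, heq.1, Subtype.mk.inj heq.2]
    obtain ⟨F, hF⟩ := hinj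
    have hle : Cardinal.mk W' ≤ Cardinal.mk W * Cardinal.lift.{u+1} (κ n) := by
      calc Cardinal.mk W' ≤ Cardinal.mk (W × Set.Iio ((κ n).ord)) := Cardinal.mk_le_of_injective hF
        _ = Cardinal.mk W * Cardinal.mk (Set.Iio ((κ n).ord)) := by
            rw [Cardinal.mk_prod, Cardinal.lift_id, Cardinal.lift_id]
        _ = Cardinal.mk W * Cardinal.lift.{u+1} (κ n) := by
            rw [Ordinal.mk_Iio_ordinal, Cardinal.card_ord]
    have hWlt : Cardinal.mk W < Cardinal.lift.{u+1} (κ (n+1)) :=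
      lt_trans ih (Cardinal.lift_lt.2 (hmono (Nat.lt_succ_self n)))
    have hklt : Cardinal.lift.{u+1} (κ n) < Cardinal.lift.{u+1} (κ (n+1)) :=
      Cardinal.lift_lt.2 (hmono (Nat.lt_succ_self n))
    have haleph : (ℵ₀ : Cardinal.{u+1}) ≤ Cardinal.lift.{u+1} (κ (n+1)) := by
      simpa using (hreg (n+1)).1
    exact lt_of_le_of_lt hle (Cardinal.mul_lt_of_lt haleph hWlt hklt)

/-- Claim 45: in the tree `T` of finite initial segments occurring `λ` often in a
modulo-finite increasing cofinal family `⟨f_β : β ∈ S⟩ ⊆ ∏ₙ κₙ`, with the splitting sets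
`A(s,n)` defined recursively, there is a node `s ∈ T` with `|A(s,n)| = κ_{length s}` for all `n`. -/
theorem exists_node_with_large_splitting (κ : ℕ → Cardinal.{u}) (hmono : StrictMono κ)
    (hreg : ∀ n, (κ n).IsRegular)
    (lam : Cardinal.{u}) (hlamreg : lam.IsRegular) (hlam : (⨆ n, κ n) < lam)
    (S : Set Ordinal.{u}) (hSsub : S ⊆ Set.Iio lam.ord)
    (hScard : Cardinal.mk S = Cardinal.lift.{u + 1} lam)
    (f : Ordinal.{u} → ℕ → Ordinal.{u})
    (hval : ∀ β ∈ S, ∀ n, f β n < (κ n).ord)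
    (hinc : ∀ β ∈ S, ∀ γ ∈ S, β < γ → ∃ N, ∀ n ≥ N, f β n < f γ n)
    (hcof : ∀ g : ℕ → Ordinal.{u}, (∀ n, g n < (κ n).ord) →
      ∃ β ∈ S, ∃ N, ∀ n ≥ N, g n ≤ f β n)
    (T : Set (List Ordinal.{u}))
    (hT : T = {s | Cardinal.mk {β ∈ S | ∀ i < s.length, s.getD i 0 = f β i} =
      Cardinal.lift.{u + 1} lam})
    (A : ℕ → List Ordinal.{u} → Set (List Ordinal.{u}))
    (hA0 : ∀ s, A 0 s = {t ∈ T | s <+: t ∧ t.length = s.length + 1})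
    (hAS : ∀ n s, A (n + 1) s = {t ∈ T | s <+: t ∧ t.length = s.length + 1 ∧
      Cardinal.mk (A n t) = Cardinal.lift.{u + 1} (κ t.length)}) :
    ∃ s ∈ T, ∀ n, Cardinal.mk (A n s) = Cardinal.lift.{u + 1} (κ s.length) := by
  classical
  by_contra hcon
  push_neg at hcon
  obtain ⟨M, hM⟩ : ∃ M : List Ordinal.{u} → Set Ordinal.{u},
      M = fun s => {β ∈ S | ∀ i < s.length, s.getD i 0 = f β i} := ⟨_, rfl⟩
  have hTmem : ∀ s : List Ordinal.{u},
      s ∈ T ↔ Cardinal.mk (M s) = Cardinal.lift.{u+1} lam := by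
    intro s
    simp only [hT, hM, Set.mem_setOf_eq]
  have hMle : ∀ s, Cardinal.mk (M s) ≤ Cardinal.lift.{u+1} lam := by
    intro s
    rw [← hScard]
    apply Cardinal.mk_le_mk_of_subset
    intro β hβ
    rw [hM] at hβ
    exact hβ.1
  have haleph_lam : (ℵ₀ : Cardinal.{u+1}) ≤ Cardinal.lift.{u+1} lam := by simpa using hlamreg.1
  have hkappa_lam : ∀ n, κ n < lam := fun n =>
    lt_of_le_of_lt (le_ciSup (Cardinal.bddAbove_range κ) n) hlam
  -- values of nodes of T are bounded
  have hvalT : ∀ s ∈ T, ∀ i < s.length, s.getD i 0 < (κ i).ord := by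
    intro s hs i hi
    rw [hTmem] at hs
    have hne : Nonempty (M s) := by
      apply Cardinal.mk_ne_zero_iff.mp
      rw [hs]
      exact ne_of_gt (lt_of_lt_of_le Cardinal.aleph0_pos haleph_lam)
    obtain ⟨β, hβ⟩ := hne
    rw [hM] at hβ
    obtain ⟨hβS, hβv⟩ := hβ
    rw [hβv i hi]
    exact hval β hβS i
  -- basic facts about A
  have hA_sub0 : ∀ n s, A n s ⊆ A 0 s := by
    intro n s
    cases n with
    | zero => exact subset_rfl
    | succ n =>
      rw [hA0, hAS]
      rintro t ⟨h1, h2, h3, -⟩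
      exact ⟨h1, h2, h3⟩
  have hA_mem_T : ∀ n s, ∀ t ∈ A n s, t ∈ T ∧ s <+: t ∧ t.length = s.length + 1 := by
    intro n s t ht
    have h := hA_sub0 n s ht
    rw [hA0] at h
    exact ⟨h.1, h.2.1, h.2.2⟩
  have hA0le : ∀ s, Cardinal.mk (A 0 s) ≤ Cardinal.lift.{u+1} (κ s.length) := by
    intro s
    have hF : ∃ F : A 0 s → Set.Iio ((κ s.length).ord), Function.Injective F := by
      refine ⟨fun t => ⟨t.1.getD s.length 0, ?_⟩, ?_⟩
      · obtain ⟨htT, hpre, hlen⟩ := hA_mem_T 0 s t.1 t.2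
        exact hvalT t.1 htT s.length (by omega)
      · rintro ⟨t₁, h₁⟩ ⟨t₂, h₂⟩ heq
        simp only [Subtype.mk.injEq] at heq
        obtain ⟨hT₁, hpre₁, hlen₁⟩ := hA_mem_T 0 s t₁ h₁
        obtain ⟨hT₂, hpre₂, hlen₂⟩ := hA_mem_T 0 s t₂ h₂
        apply Subtype.ext
        show t₁ = t₂
        have e₁ : t₁.take s.length = s := (List.prefix_iff_eq_take.mp hpre₁).symm
        have e₂ : t₂.take s.length = s := (List.prefix_iff_eq_take.mp hpre₂).symm
        rw [← claim45_take_concat hlen₁, ← claim45_take_concat hlen₂, e₁, e₂, heq]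
    obtain ⟨F, hF⟩ := hF
    calc Cardinal.mk (A 0 s) ≤ Cardinal.mk (Set.Iio ((κ s.length).ord)) :=
          Cardinal.mk_le_of_injective hF
      _ = Cardinal.lift.{u+1} (κ s.length) := by rw [Ordinal.mk_Iio_ordinal, Cardinal.card_ord]
  have hAle : ∀ n s, Cardinal.mk (A n s) ≤ Cardinal.lift.{u+1} (κ s.length) := fun n s =>
    le_trans (Cardinal.mk_le_mk_of_subset (hA_sub0 n s)) (hA0le s)
  have hAdec : ∀ n s, A (n+1) s ⊆ A n s := by
    intro n
    induction n with
    | zero =>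
      intro s
      rw [hAS, hA0]
      rintro t ⟨h1, h2, h3, -⟩
      exact ⟨h1, h2, h3⟩
    | succ n ih =>
      intro s
      rw [hAS, hAS]
      rintro t ⟨h1, h2, h3, h4⟩
      refine ⟨h1, h2, h3, le_antisymm (hAle n t) ?_⟩
      rw [← h4]
      exact Cardinal.mk_le_mk_of_subset (ih t)
  have hAadd : ∀ k n s, A (n + k) s ⊆ A n s := by
    intro k
    induction k with
    | zero => intro n s; exact subset_rfl
    | succ k ih => intro n s t ht; exact ih n s (hAdec (n + k) s ht)
  have hAmono : ∀ {n m : ℕ}, n ≤ m → ∀ s, A m s ⊆ A n s := by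
    intro n m h s
    obtain ⟨k, rfl⟩ := Nat.exists_eq_add_of_le h
    exact hAadd k n s
  -- choice of least bad level
  have hex : ∀ s ∈ T, ∃ n, Cardinal.mk (A n s) < Cardinal.lift.{u+1} (κ s.length) := by
    intro s hs
    obtain ⟨n, hn⟩ := hcon s hs
    exact ⟨n, lt_of_le_of_ne (hAle n s) hn⟩
  obtain ⟨nn, hnn⟩ : ∃ nn : List Ordinal.{u} → ℕ, nn = fun s =>
      if h : ∃ n, Cardinal.mk (A n s) < Cardinal.lift.{u+1} (κ s.length)
      then Nat.find h else 0 := ⟨_, rfl⟩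
  have hnn1 : ∀ s ∈ T, Cardinal.mk (A (nn s) s) < Cardinal.lift.{u+1} (κ s.length) := by
    intro s hs
    simp only [hnn]
    rw [dif_pos (hex s hs)]
    exact Nat.find_spec (hex s hs)
  have hnn2 : ∀ s m, Cardinal.mk (A m s) < Cardinal.lift.{u+1} (κ s.length) → nn s ≤ m := by
    intro s m hm
    simp only [hnn]
    rw [dif_pos ⟨m, hm⟩]
    exact Nat.find_le hm
  -- the small sets of "used" values at each level
  obtain ⟨E, hE⟩ : ∃ E : ℕ → Set Ordinal.{u}, E = fun n =>
      {o | ∃ s, (s ∈ T ∧ s.length = n) ∧ ∃ t ∈ A (nn s) s, t.getD n 0 = o} := ⟨_, rfl⟩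
  have hEbound : ∀ n, ∀ o ∈ E n, o < (κ n).ord := by
    intro n o ho
    rw [hE] at ho
    obtain ⟨s, ⟨hsT, hslen⟩, t, htA, rfl⟩ := ho
    obtain ⟨htT, hpre, hlen⟩ := hA_mem_T (nn s) s t htA
    exact hvalT t htT n (by omega)
  have hEcard : ∀ n, Cardinal.mk (E n) < Cardinal.lift.{u+1} (κ n) := by
    intro n
    have hsub : E n ⊆ ⋃ (s : {s : List Ordinal.{u} // s ∈ T ∧ s.length = n}),
        (fun t : List Ordinal.{u} => t.getD n 0) '' (A (nn s.1) s.1) := by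
      rw [hE]
      rintro o ⟨s, hs, t, htA, rfl⟩
      exact Set.mem_iUnion.mpr ⟨⟨s, hs⟩, Set.mem_image_of_mem _ htA⟩
    have hidx : Cardinal.mk {s : List Ordinal.{u} // s ∈ T ∧ s.length = n}
        < Cardinal.lift.{u+1} (κ n) := by
      have hsub2 : {s : List Ordinal.{u} | s ∈ T ∧ s.length = n}
          ⊆ {s : List Ordinal.{u} | s.length = n ∧ ∀ i < n, s.getD i 0 < (κ i).ord} := by
        rintro s ⟨hsT, hslen⟩
        exact ⟨hslen, fun i hi => hvalT s hsT i (by rw [hslen]; exact hi)⟩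
      exact lt_of_le_of_lt (Cardinal.mk_le_mk_of_subset hsub2) (claim45_mk_level κ hmono hreg n)
    calc Cardinal.mk (E n)
        ≤ Cardinal.mk (⋃ (s : {s : List Ordinal.{u} // s ∈ T ∧ s.length = n}),
            (fun t : List Ordinal.{u} => t.getD n 0) '' (A (nn s.1) s.1)) :=
          Cardinal.mk_le_mk_of_subset hsub
      _ ≤ Cardinal.sum (fun s : {s : List Ordinal.{u} // s ∈ T ∧ s.length = n} =>
            Cardinal.mk ((fun t : List Ordinal.{u} => t.getD n 0) '' (A (nn s.1) s.1))) :=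
          Cardinal.mk_iUnion_le_sum_mk
      _ < Cardinal.lift.{u+1} (κ n) := by
          refine Cardinal.sum_lt_of_isRegular (claim45_isRegular_lift (hreg n)) hidx (fun s => ?_)
          refine lt_of_le_of_lt Cardinal.mk_image_le ?_
          have h := hnn1 s.1 s.2.1
          rwa [s.2.2] at h
  have hgex : ∀ n, ∃ b, b < (κ n).ord ∧ ∀ o ∈ E n, o < b := fun n =>
    claim45_bounded (hreg n) (E n) (hEbound n) (hEcard n)
  choose g hg1 hg2 using hgex
  obtain ⟨β₀, hβ₀S, N, hN⟩ := hcof g hg1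
  -- nodes
  obtain ⟨node, hnode⟩ : ∃ node : Ordinal.{u} → ℕ → List Ordinal.{u},
      node = fun β n => (List.range n).map (f β) := ⟨_, rfl⟩
  have hnode_len : ∀ β n, (node β n).length = n := by intro β n; simp [hnode]
  have hnode_getD : ∀ β n i, i < n → (node β n).getD i 0 = f β i := by
    intro β n i hi
    simp only [hnode]
    rw [List.getD_eq_getElem _ 0 (by simpa using hi)]
    simp
  have hnode_succ : ∀ β n, node β (n+1) = node β n ++ [f β n] := by
    intro β n; simp [hnode, List.range_succ]
  have hnode_mem : ∀ β ∈ S, ∀ n, β ∈ M (node β n) := by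
    intro β hβ n
    rw [hM]
    refine ⟨hβ, fun i hi => ?_⟩
    rw [hnode_getD β n i (by rwa [hnode_len] at hi)]
  -- the bad set
  obtain ⟨Bad, hBad⟩ : ∃ Bad : Set Ordinal.{u},
      Bad = {β | β ∈ S ∧ ∃ n, node β n ∉ T} := ⟨_, rfl⟩
  have hBadcard : Cardinal.mk Bad < Cardinal.lift.{u+1} lam := by
    have hBn : ∀ n : ℕ, Cardinal.mk {β | β ∈ S ∧ node β n ∉ T} < Cardinal.lift.{u+1} lam := by
      intro n
      have hsub : {β | β ∈ S ∧ node β n ∉ T} ⊆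
          ⋃ (s : {s : List Ordinal.{u} //
            (s.length = n ∧ ∀ i < n, s.getD i 0 < (κ i).ord) ∧ s ∉ T}), M s.1 := by
        rintro β ⟨hβS, hβT⟩
        refine Set.mem_iUnion.mpr ⟨⟨node β n, ⟨⟨hnode_len β n, fun i hi => ?_⟩, hβT⟩⟩,
          hnode_mem β hβS n⟩
        rw [hnode_getD β n i hi]
        exact hval β hβS i
      have hVcard : Cardinal.mk {s : List Ordinal.{u} //
          (s.length = n ∧ ∀ i < n, s.getD i 0 < (κ i).ord) ∧ s ∉ T}
          < Cardinal.lift.{u+1} lam := by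
        refine lt_trans (lt_of_le_of_lt (Cardinal.mk_le_mk_of_subset ?_)
          (claim45_mk_level κ hmono hreg n)) (Cardinal.lift_lt.2 (hkappa_lam n))
        rintro s ⟨h1, -⟩
        exact h1
      refine lt_of_le_of_lt (le_trans (Cardinal.mk_le_mk_of_subset hsub)
        Cardinal.mk_iUnion_le_sum_mk) ?_
      refine Cardinal.sum_lt_of_isRegular (claim45_isRegular_lift hlamreg) hVcard (fun s => ?_)
      refine lt_of_le_of_ne (hMle s.1) (fun h => s.2.2 ((hTmem s.1).mpr h))
    have hsub2 : Bad ⊆ ⋃ (n : ULift.{u+1} ℕ), {β | β ∈ S ∧ node β n.down ∉ T} := by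
      rw [hBad]
      rintro β ⟨hβS, n, hn⟩
      exact Set.mem_iUnion.mpr ⟨⟨n⟩, hβS, hn⟩
    refine lt_of_le_of_lt (le_trans (Cardinal.mk_le_mk_of_subset hsub2)
      Cardinal.mk_iUnion_le_sum_mk) ?_
    refine Cardinal.sum_lt_of_isRegular (claim45_isRegular_lift hlamreg) ?_ (fun n => hBn n.down)
    have h1 : Cardinal.mk (ULift.{u+1} ℕ) = (ℵ₀ : Cardinal.{u+1}) := by simp
    rw [h1]
    have h2 : ℵ₀ < lam := lt_of_le_of_lt (hreg 0).1 (hkappa_lam 0)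
    calc (ℵ₀ : Cardinal.{u+1}) = Cardinal.lift.{u+1} ℵ₀ := by simp
      _ < Cardinal.lift.{u+1} lam := Cardinal.lift_lt.2 h2
  -- there are λ-many β above β₀ avoiding Bad
  have hIic : Cardinal.mk (S ∩ Set.Iic β₀ : Set Ordinal.{u}) < Cardinal.lift.{u+1} lam := by
    have h1 : (S ∩ Set.Iic β₀ : Set Ordinal.{u}) ⊆ Set.Iio (Order.succ β₀) := fun x hx =>
      Set.mem_Iio.mpr (Order.lt_succ_iff.mpr hx.2)
    have h3 : (Order.succ β₀).card < lam := by
      rw [← Cardinal.lt_ord]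
      exact (Cardinal.isSuccLimit_ord hlamreg.1).succ_lt (hSsub hβ₀S)
    calc Cardinal.mk (S ∩ Set.Iic β₀ : Set Ordinal.{u})
        ≤ Cardinal.mk (Set.Iio (Order.succ β₀)) := Cardinal.mk_le_mk_of_subset h1
      _ = Cardinal.lift.{u+1} (Order.succ β₀).card := Ordinal.mk_Iio_ordinal _
      _ < Cardinal.lift.{u+1} lam := Cardinal.lift_lt.2 h3
  have hpick : ∃ β ∈ S, β ∉ Bad ∧ β₀ < β := by
    by_contra hno
    push_neg at hno
    have hsub : S ⊆ Bad ∪ (S ∩ Set.Iic β₀) := by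
      intro β hβ
      by_cases hb : β ∈ Bad
      · exact Or.inl hb
      · exact Or.inr ⟨hβ, hno β hβ hb⟩
    have hle : Cardinal.mk S ≤ Cardinal.mk Bad + Cardinal.mk (S ∩ Set.Iic β₀ : Set Ordinal.{u}) :=
      le_trans (Cardinal.mk_le_mk_of_subset hsub) (Cardinal.mk_union_le _ _)
    rw [hScard] at hle
    exact absurd hle (not_le.mpr (Cardinal.add_lt_of_lt haleph_lam hBadcard hIic))
  obtain ⟨β, hβS, hβBad, hβ₀β⟩ := hpick
  obtain ⟨N', hN'⟩ := hinc β₀ hβ₀S β hβS hβ₀β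
  have hsT : ∀ k, node β k ∈ T := by
    intro k
    by_contra hk
    exact hβBad (hBad ▸ ⟨hβS, k, hk⟩)
  have p2 : ∀ k, max N N' ≤ k → node β (k+1) ∉ A (nn (node β k)) (node β k) := by
    intro k hk hmem
    have hEk : (node β (k+1)).getD k 0 ∈ E k := by
      rw [hE]
      exact ⟨node β k, ⟨hsT k, hnode_len β k⟩, node β (k+1), hmem, rfl⟩
    have h1 : (node β (k+1)).getD k 0 < g k := hg2 k _ hEk
    rw [hnode_getD β (k+1) k (Nat.lt_succ_self k)] at h1
    have h2 : g k ≤ f β₀ k := hN k (le_trans (le_max_left _ _) hk)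
    have h3 : f β₀ k < f β k := hN' k (le_trans (le_max_right _ _) hk)
    exact absurd (lt_trans (lt_of_lt_of_le h1 h2) h3) (lt_irrefl _)
  have p3 : ∀ m k, max N N' ≤ k → node β (k+1) ∈ A m (node β k) := by
    intro m
    induction m with
    | zero =>
      intro k hk
      rw [hA0]
      refine ⟨hsT (k+1), ?_, ?_⟩
      · rw [hnode_succ]; exact List.prefix_append _ _
      · rw [hnode_len, hnode_len]
    | succ m ih =>
      intro k hk
      rw [hAS]
      refine ⟨hsT (k+1), ?_, ?_, ?_⟩
      · rw [hnode_succ]; exact List.prefix_append _ _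
      · rw [hnode_len, hnode_len]
      · by_contra hne
        have hlt := lt_of_le_of_ne (hAle m (node β (k+1))) hne
        have hle := hnn2 (node β (k+1)) m hlt
        exact p2 (k+1) (le_trans hk (Nat.le_succ k))
          (hAmono hle (node β (k+1)) (ih (k+1) (le_trans hk (Nat.le_succ k))))
  obtain ⟨n, hne⟩ := hcon (node β (max N N' + 1)) (hsT (max N N' + 1))
  apply hne
  have h := p3 (n+1) (max N N') le_rfl
  rw [hAS] at h
  exact h.2.2.2
end

section
/- For every set S of ordinals of cardinality ℵ_{ω+1} and every coloring h : [S]² → {0,1} of pairs of S, either there is a subset T ⊆ S of cardinality ℵ_{ω+1} all of whose pairs have color 0, or there is a subset A ⊆ S of order type ω+1 all of whose pairs have color 1. -/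
open Cardinal Ordinal Set

universe u

noncomputable section

/-- Increasing enumeration of an infinite set of ordinals. -/
lemma edm_aux_seq (A : Set Ordinal.{u}) (hA : A.Infinite) :
    ∃ f : ℕ → Ordinal.{u}, StrictMono f ∧ ∀ n, f n ∈ A := by
  classical
  let step : {s : Set Ordinal.{u} // s.Infinite ∧ s ⊆ A} →
      {s : Set Ordinal.{u} // s.Infinite ∧ s ⊆ A} :=
    fun s => ⟨s.1 \ {WellFounded.min Ordinal.lt_wf s.1 s.2.1.nonempty},
      s.2.1.diff (Set.finite_singleton _), fun x hx => s.2.2 hx.1⟩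
  let v : ℕ → {s : Set Ordinal.{u} // s.Infinite ∧ s ⊆ A} :=
    fun n => step^[n] ⟨A, hA, subset_rfl⟩
  let g : {s : Set Ordinal.{u} // s.Infinite ∧ s ⊆ A} → Ordinal.{u} :=
    fun s => WellFounded.min Ordinal.lt_wf s.1 s.2.1.nonempty
  have hgmem : ∀ s, g s ∈ s.1 := fun s => WellFounded.min_mem _ _ _
  have hv : ∀ n, v (n+1) = step (v n) := fun n => Function.iterate_succ_apply' step n _
  refine ⟨fun n => g (v n), strictMono_nat_of_lt_succ (fun n => ?_), fun n => (v n).2.2 (hgmem _)⟩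
  have h1 : g (v (n+1)) ∈ (v n).1 \ {g (v n)} := by
    rw [hv n]; exact hgmem (step (v n))
  have h2 : ¬ g (v (n+1)) < g (v n) := WellFounded.not_lt_min _ _ h1.1
  have h3 : g (v (n+1)) ≠ g (v n) := by simpa using h1.2
  exact lt_of_le_of_ne (not_lt.1 h2) h3.symm

lemma edm_aux_S1 (S : Set Ordinal.{u}) {κ : Cardinal.{u+1}} (hreg : κ.IsRegular)
    (hS : Cardinal.mk S = κ) :
    ∃ S₁ ⊆ S, Cardinal.mk S₁ = κ ∧ (∀ b ∈ S₁, #{x | x ∈ S₁ ∧ x < b} < κ) ∧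
      (∀ A ⊆ S₁, #A < κ → ∃ b ∈ S₁, ∀ a ∈ A, a < b) := by
  classical
  have hto : κ.ord ≤ Ordinal.type ((· < ·) : S → S → Prop) :=
    Cardinal.ord_le.2 (by rw [card_type, hS])
  set τ : S → Ordinal.{u+1} := fun y => Ordinal.typein ((· < ·) : S → S → Prop) y with hτ
  have hτlt : ∀ y z : S, τ y < τ z ↔ y < z := fun y z => typein_lt_typein _
  set Y : Set S := {y | τ y < κ.ord} with hY
  set S₁ : Set Ordinal.{u} := Subtype.val '' Y with hS₁
  have hsub : S₁ ⊆ S := by rintro x ⟨y, _, rfl⟩; exact y.2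
  -- membership unpacking
  have hmemτ : ∀ x (hx : x ∈ S₁), τ ⟨x, hsub hx⟩ < κ.ord := by
    rintro x ⟨y, hy, rfl⟩
    exact hy
  have hmem' : ∀ (y : S), τ y < κ.ord → (y : Ordinal) ∈ S₁ := fun y hy => ⟨y, hy, rfl⟩
  refine ⟨S₁, hsub, ?_, ?_, ?_⟩
  · -- cardinality
    have e : Y ≃ (Iio κ.ord) := by
      refine ⟨fun y => ⟨τ y.1, y.2⟩,
        fun ξ => ⟨Ordinal.enum _ ⟨ξ.1, lt_of_lt_of_le ξ.2 hto⟩, ?_⟩, ?_, ?_⟩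
      · show τ _ < κ.ord
        rw [hτ]; simp only [typein_enum]; exact ξ.2
      · intro y
        apply Subtype.ext
        exact Ordinal.enum_typein _ y.1
      · intro ξ
        apply Subtype.ext
        exact Ordinal.typein_enum _ _
    have h1 : #S₁ = #Y := mk_image_eq Subtype.val_injective
    have h2 : Cardinal.lift.{u+2} #Y = Cardinal.lift.{u+1} #(Iio κ.ord) :=
      Cardinal.lift_mk_eq'.2 ⟨e⟩
    rw [Cardinal.mk_Iio_ordinal, card_ord] at h2
    rw [h1]
    apply Cardinal.lift_injective.{u+2}
    rw [h2]; simp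
  · -- initial segments small
    rintro b hb
    have hbτ := hmemτ b hb
    have hemb : {x | x ∈ S₁ ∧ x < b} ↪ Iio (τ ⟨b, hsub hb⟩) := by
      refine ⟨fun x => ⟨τ ⟨x.1, hsub x.2.1⟩, ?_⟩, ?_⟩
      · exact (hτlt _ _).2 (by exact_mod_cast x.2.2)
      · intro x x' hxx'
        have := Subtype.mk_eq_mk.1 hxx'
        have h2 : (⟨x.1, hsub x.2.1⟩ : S) = ⟨x'.1, hsub x'.2.1⟩ :=
          (Ordinal.typein _).injective this
        exact Subtype.ext (Subtype.mk_eq_mk.1 h2)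
    have h1 : Cardinal.lift.{u+2} #{x | x ∈ S₁ ∧ x < b} ≤
        Cardinal.lift.{u+1} #(Iio (τ ⟨b, hsub hb⟩)) := Cardinal.lift_mk_le'.2 ⟨hemb⟩
    rw [Cardinal.mk_Iio_ordinal] at h1
    have h2 : (τ ⟨b, hsub hb⟩).card < κ := Cardinal.lt_ord.1 hbτ
    have h3 : Cardinal.lift.{u+2} #{x | x ∈ S₁ ∧ x < b} < Cardinal.lift.{u+2} κ := by
      refine lt_of_le_of_lt h1 ?_
      simpa using (Cardinal.lift_lt.{u+1, u+2}).2 h2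
    exact Cardinal.lift_lt.1 h3
  · -- bounding
    intro A hA hAκ
    have hAS : ∀ a : A, (a : Ordinal) ∈ S := fun a => hsub (hA a.2)
    set f : A → Ordinal.{u+1} := fun a => τ ⟨a.1, hAS a⟩ + 1 with hf
    have hflt : ∀ a, f a < κ.ord := by
      intro a
      have h1 : τ ⟨a.1, hAS a⟩ < κ.ord := hmemτ a.1 (hA a.2)
      have hlim : Order.IsSuccLimit κ.ord := isSuccLimit_ord hreg.aleph0_le
      rw [hf]; simp only [Ordinal.add_one_eq_succ]
      exact hlim.succ_lt h1
    have hι : #A < κ.ord.cof := by rw [hreg.cof_eq]; exact hAκ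
    have hξ : iSup f < κ.ord := Ordinal.iSup_lt_ord hι hflt
    set b : S := Ordinal.enum _ ⟨iSup f, lt_of_lt_of_le hξ hto⟩ with hb
    have hbτ : τ b = iSup f := by rw [hτ, hb]; exact typein_enum _ _
    refine ⟨b.1, hmem' b (by rw [hbτ]; exact hξ), ?_⟩
    intro a ha
    have h1 : τ ⟨a, hAS ⟨a, ha⟩⟩ < τ b := by
      rw [hbτ]
      exact lt_of_lt_of_le (lt_add_one _) (Ordinal.le_iSup f ⟨a, ha⟩)
    exact (hτlt _ _).1 h1

/-- Erdős–Dushnik–Miller, `ℵ_{ω+1} → (ℵ_{ω+1}, ω+1)²`: for any set `S` of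
ordinals of cardinality `ℵ_{ω+1}` and any `2`-coloring of pairs, either there is `T ⊆ S`
of cardinality `ℵ_{ω+1}` homogeneous for color `0`, or a subset of `S` of order type `ω+1`
homogeneous for color `1`. -/
theorem erdos_dushnik_miller_aleph_omega_succ (S : Set Ordinal)
    (hS : Cardinal.mk S = aleph (Ordinal.omega0 + 1))
    (h : Ordinal → Ordinal → Fin 2) :
    (∃ T ⊆ S, Cardinal.mk T = aleph (Ordinal.omega0 + 1) ∧
      ∀ ξ ∈ T, ∀ ν ∈ T, ξ < ν → h ξ ν = 0) ∨
    (∃ a : ℕ → Ordinal, ∃ top : Ordinal, StrictMono a ∧ (∀ n, a n ∈ S) ∧ top ∈ S ∧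
      (∀ n, a n < top) ∧ (∀ m n, m < n → h (a m) (a n) = 1) ∧ ∀ n, h (a n) top = 1) := by
  classical
  set κ := aleph (Ordinal.omega0 + 1) with hκdef
  have hreg : κ.IsRegular := by
    rw [hκdef, Ordinal.add_one_eq_succ, aleph_succ]
    exact isRegular_succ (aleph0_le_aleph _)
  have hℵ0 : ℵ₀ < κ := by
    refine lt_of_le_of_lt (aleph0_le_aleph 0) ?_
    rw [hκdef, aleph_lt_aleph]
    exact lt_of_le_of_lt zero_le (lt_add_one _)
  have hκ0 : κ ≠ 0 := hreg.pos.ne'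
  obtain ⟨S₁, hS₁S, hS₁κ, hseg, hbdd⟩ := edm_aux_S1 S hreg hS
  have hnonempty : ∀ (X : Set Ordinal), #X = κ → X.Nonempty := by
    intro X hX
    rw [Set.nonempty_iff_ne_empty]; rintro rfl; simp at hX; exact hκ0 hX.symm
  set C : Ordinal → Set Ordinal := fun β => {α | α ∈ S₁ ∧ α < β ∧ h α β = 1} with hC
  set P : Set Ordinal → Prop := fun A => ∀ x ∈ A, ∀ y ∈ A, x < y → h x y = 1 with hP
  by_cases hR : ∃ β ∈ S₁, ∃ A, A ⊆ C β ∧ P A ∧ A.Infinite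
  · -- RIGHT disjunct
    obtain ⟨β, hβ, A, hAC, hPA, hAinf⟩ := hR
    obtain ⟨f, hfmono, hfA⟩ := edm_aux_seq A hAinf
    right
    exact ⟨f, β, hfmono, fun n => hS₁S (hAC (hfA n)).1, hS₁S hβ,
      fun n => (hAC (hfA n)).2.1,
      fun m n hmn => hPA _ (hfA m) _ (hfA n) (hfmono hmn),
      fun n => (hAC (hfA n)).2.2⟩
  · left
    push_neg at hR
    -- hR : ∀ β ∈ S₁, ∀ A, A ⊆ C β → P A → ¬ A.Infinite
    -- maximal pairwise-1 subsets of C β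
    have hM : ∀ β : Ordinal, ∃ Mb, Mb ⊆ C β ∧ P Mb ∧
        ∀ A, A ⊆ C β → P A → Mb ⊆ A → A = Mb := by
      intro β
      have hchainU : ∀ c ⊆ {A | A ⊆ C β ∧ P A}, IsChain (· ⊆ ·) c →
          ∃ ub ∈ {A | A ⊆ C β ∧ P A}, ∀ s ∈ c, s ⊆ ub := by
        intro c hc hchain
        refine ⟨⋃₀ c, ⟨sUnion_subset fun s hs => (hc hs).1, ?_⟩,
          fun s hs => subset_sUnion_of_mem hs⟩
        rintro x ⟨s, hs, hxs⟩ y ⟨t, ht, hyt⟩ hxy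
        rcases eq_or_ne s t with rfl | hst
        · exact (hc hs).2 x hxs y hyt hxy
        · rcases hchain.total hs ht with hsub | hsub
          · exact (hc ht).2 x (hsub hxs) y hyt hxy
          · exact (hc hs).2 x hxs y (hsub hyt) hxy
      obtain ⟨m, hm1, hm2⟩ := zorn_subset {A | A ⊆ C β ∧ P A} hchainU
      exact ⟨m, hm1.1, hm1.2, fun A hAC hPA hmA => (hm2 ⟨hAC, hPA⟩ hmA).antisymm hmA⟩
    choose M hM1 hM2 hM3 using hM
    have hMfin : ∀ β ∈ S₁, (M β).Finite := by
      intro β hβ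
      by_contra hinf
      exact hinf (hR β hβ (M β) (hM1 β) (hM2 β))
    have hMS₁ : ∀ β, M β ⊆ S₁ := fun β x hx => ((hM1 β) hx).1
    have hMlt : ∀ β, ∀ x ∈ M β, x < β := fun β x hx => ((hM1 β) hx).2.1
    set A : Ordinal → Set Ordinal := fun γ => {β | β ∈ S₁ ∧ ∀ x ∈ M β, x < γ} with hA
    -- bounding lemma : some A γ with γ ∈ S₁ has full size
    have hbound : ∃ γ ∈ S₁, #(A γ) = κ := by
      by_contra hcon
      push_neg at hcon
      have hlt : ∀ γ ∈ S₁, #(A γ) < κ := by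
        intro γ hγ
        refine lt_of_le_of_ne ?_ (hcon γ hγ)
        calc #(A γ) ≤ #S₁ := mk_le_mk_of_subset (fun β hβ => hβ.1)
        _ = κ := hS₁κ
      have step : ∀ d ∈ S₁, ∃ d', d' ∈ S₁ ∧ d < d' ∧ ∀ β ∈ A d, β < d' := by
        intro d hd
        have hcard : #(A d ∪ {d} : Set Ordinal) < κ := by
          refine lt_of_le_of_lt (mk_union_le _ _) ?_
          refine Cardinal.add_lt_of_lt hreg.aleph0_le (hlt d hd) ?_
          exact lt_of_lt_of_le (by simp) hℵ0.le
        obtain ⟨b, hb, hub⟩ := hbdd (A d ∪ {d})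
          (union_subset (fun β hβ => hβ.1) (by simpa using hd)) hcard
        exact ⟨b, hb, hub d (mem_union_right _ rfl), fun β hβ => hub β (mem_union_left _ hβ)⟩
      choose F hF1 hF2 hF3 using step
      have hS₁ne : S₁.Nonempty := hnonempty S₁ hS₁κ
      let δ : ℕ → {x : Ordinal // x ∈ S₁} := fun n =>
        Nat.rec ⟨hS₁ne.choose, hS₁ne.choose_spec⟩ (fun _ p => ⟨F p.1 p.2, hF1 p.1 p.2⟩) n
      have hδsucc : ∀ n, (δ (n+1)).1 = F (δ n).1 (δ n).2 := fun n => rfl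
      have hδ3 : ∀ n, ∀ β ∈ A (δ n).1, β < (δ (n+1)).1 := by
        intro n β hβ; rw [hδsucc]; exact hF3 (δ n).1 (δ n).2 β hβ
      set U : Set Ordinal := {x | x ∈ S₁ ∧ ∀ n, (δ n).1 ≤ x} with hU
      have hUne : U.Nonempty := by
        by_contra hUe
        rw [Set.not_nonempty_iff_eq_empty] at hUe
        have hcover : S₁ ⊆ ⋃ (n : ULift.{u_1+1} ℕ), {x | x ∈ S₁ ∧ x < (δ n.down).1} := by
          intro x hx
          have hxU : x ∉ U := by rw [hUe]; exact notMem_empty x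
          rw [hU] at hxU
          simp only [mem_setOf_eq, not_and, not_forall, not_le] at hxU
          obtain ⟨n, hn⟩ := hxU hx
          exact mem_iUnion.2 ⟨⟨n⟩, hx, hn⟩
        have hle : κ ≤ Cardinal.sum (fun n : ULift.{u_1+1} ℕ => #{x | x ∈ S₁ ∧ x < (δ n.down).1}) := by
          rw [← hS₁κ]
          exact (mk_le_mk_of_subset hcover).trans mk_iUnion_le_sum_mk
        have hslt : Cardinal.sum (fun n : ULift.{u_1+1} ℕ => #{x | x ∈ S₁ ∧ x < (δ n.down).1}) < κ := by
          refine Cardinal.sum_lt_of_isRegular hreg ?_ ?_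
          · simpa using hℵ0
          · exact fun n => hseg (δ n.down).1 (δ n.down).2
        exact absurd (hle.trans_lt hslt) (lt_irrefl κ)
      set δω := WellFounded.min Ordinal.lt_wf U hUne with hδω
      have hδωU : δω ∈ U := WellFounded.min_mem _ _ _
      have hexn : ∃ n, δω ∈ A (δ n).1 := by
        rcases (M δω).eq_empty_or_nonempty with he | hne
        · exact ⟨0, hδωU.1, by rw [he]; intro x hx; exact absurd hx (notMem_empty x)⟩
        · have hfin := hMfin δω hδωU.1
          set m := sSup (M δω) with hm
          have hmM : m ∈ M δω := hne.csSup_mem hfin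
          have hmlt : m < δω := hMlt _ _ hmM
          have hmU : m ∉ U := fun hmU => WellFounded.not_lt_min _ _ hmU hmlt
          rw [hU] at hmU
          simp only [mem_setOf_eq, not_and, not_forall, not_le] at hmU
          obtain ⟨n, hn⟩ := hmU (hMS₁ _ hmM)
          exact ⟨n, hδωU.1, fun x hx => lt_of_le_of_lt (le_csSup hfin.bddAbove hx) hn⟩
      obtain ⟨n, hn⟩ := hexn
      exact absurd (hδ3 n δω hn) (not_lt.2 (hδωU.2 (n+1)))
    obtain ⟨γ0, hγ0S₁, hγ0⟩ := hbound
    set I := {x | x ∈ S₁ ∧ x < γ0} with hI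
    have hIlt : #I < κ := hseg γ0 hγ0S₁
    have hFinsetI : #(Finset I) < κ := by
      rcases finite_or_infinite I with hfin | hinf
      · haveI := hfin
        haveI := Fintype.ofFinite I
        exact lt_of_lt_of_le (Cardinal.mk_lt_aleph0_iff.2 inferInstance) hℵ0.le
      · rw [mk_finset_of_infinite]; exact hIlt
    set φ : Ordinal → Finset I := fun β =>
      if hβ : β ∈ A γ0 then ((hMfin β hβ.1).toFinset.subtype (· ∈ I)) else ∅ with hφ
    have hφmem : ∀ β (hβ : β ∈ A γ0), ∀ x (hx : x ∈ I), (⟨x, hx⟩ : I) ∈ φ β ↔ x ∈ M β := by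
      intro β hβ x hx
      rw [hφ]
      simp only [hβ, dif_pos, Finset.mem_subtype, Set.Finite.mem_toFinset]
    have hMI : ∀ β ∈ A γ0, M β ⊆ I := by
      intro β hβ x hx
      exact ⟨hMS₁ β hx, hβ.2 x hx⟩
    have hpigeon : ∃ F : Finset I, #{β | β ∈ A γ0 ∧ φ β = F} = κ := by
      by_contra hcon
      push_neg at hcon
      have hlt : ∀ F : Finset I, #{β | β ∈ A γ0 ∧ φ β = F} < κ := by
        intro F
        refine lt_of_le_of_ne ?_ (hcon F)
        calc #{β | β ∈ A γ0 ∧ φ β = F} ≤ #S₁ :=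
            mk_le_mk_of_subset (fun β hβ => hβ.1.1)
        _ = κ := hS₁κ
      have hcover : A γ0 ⊆ ⋃ F : Finset I, {β | β ∈ A γ0 ∧ φ β = F} :=
        fun β hβ => mem_iUnion.2 ⟨φ β, hβ, rfl⟩
      have hle : κ ≤ Cardinal.sum (fun F : Finset I => #{β | β ∈ A γ0 ∧ φ β = F}) := by
        rw [← hγ0]
        exact (mk_le_mk_of_subset hcover).trans mk_iUnion_le_sum_mk
      exact absurd (hle.trans_lt (Cardinal.sum_lt_of_isRegular hreg hFinsetI hlt))
        (lt_irrefl κ)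
    obtain ⟨F₀, hF₀⟩ := hpigeon
    set B := {β | β ∈ A γ0 ∧ φ β = F₀} with hB
    obtain ⟨β₀, hβ₀⟩ := hnonempty B hF₀
    set M₀ := M β₀ with hM₀
    have hMconst : ∀ β ∈ B, M β = M₀ := by
      intro β hβ
      ext x
      constructor
      · intro hx
        have hxI : x ∈ I := hMI β hβ.1 hx
        have h1 : (⟨x, hxI⟩ : I) ∈ φ β := (hφmem β hβ.1 x hxI).2 hx
        rw [hβ.2, ← hβ₀.2] at h1
        exact (hφmem β₀ hβ₀.1 x hxI).1 h1
      · intro hx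
        have hxI : x ∈ I := hMI β₀ hβ₀.1 hx
        have h1 : (⟨x, hxI⟩ : I) ∈ φ β₀ := (hφmem β₀ hβ₀.1 x hxI).2 hx
        rw [hβ₀.2, ← hβ.2] at h1
        exact (hφmem β hβ.1 x hxI).1 h1
    set T := B \ M₀ with hT
    have hTS₁ : T ⊆ S₁ := fun β hβ => hβ.1.1.1
    refine ⟨T, fun β hβ => hS₁S (hTS₁ hβ), ?_, ?_⟩
    · -- cardinality of T
      have hfin0 : (B ∩ M₀).Finite := (hMfin β₀ hβ₀.1.1).inter_of_right B
      have key : #(B \ (B ∩ M₀) : Set Ordinal) + #(B ∩ M₀ : Set Ordinal) = #B :=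
        mk_diff_add_mk inter_subset_left
      rw [Set.diff_self_inter] at key
      have hTle : #T ≤ κ := le_of_le_of_eq (mk_le_mk_of_subset hTS₁) hS₁κ
      rcases lt_or_eq_of_le hTle with hTlt | hTeq
      · exfalso
        have : #B < κ :=
          key ▸ Cardinal.add_lt_of_lt hreg.aleph0_le hTlt
            (lt_of_lt_of_le hfin0.lt_aleph0 hℵ0.le)
        rw [hF₀] at this
        exact lt_irrefl κ this
      · exact hTeq
    · -- homogeneity for colour 0
      rintro ξ hξ ν hν hlt
      have hξB : ξ ∈ B := hξ.1
      have hνB : ν ∈ B := hν.1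
      have hξM : ξ ∉ M₀ := hξ.2
      have hne1 : h ξ ν ≠ 1 := by
        intro h1
        have hξC : ξ ∈ C ν := ⟨hξB.1.1, hlt, h1⟩
        have hMν : M ν = M₀ := hMconst ν hνB
        have hMξ : M ξ = M₀ := hMconst ξ hξB
        have hPins : P (insert ξ M₀) := by
          intro x hx y hy hxy
          rcases hx with hxe | hx
          · rcases hy with hye | hy
            · rw [hxe, hye] at hxy; exact absurd hxy (lt_irrefl _)
            · rw [hxe] at hxy
              exact absurd hxy (lt_asymm (hMlt ξ y (hMξ.symm ▸ hy)))
          · rcases hy with hye | hy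
            · rw [hye]
              exact ((hM1 ξ) (hMξ.symm ▸ hx)).2.2
            · exact (hM2 β₀) x hx y hy hxy
        have hsubC : insert ξ M₀ ⊆ C ν := by
          refine insert_subset hξC ?_
          rw [← hMν]; exact hM1 ν
        have heq : insert ξ M₀ = M ν :=
          hM3 ν (insert ξ M₀) hsubC hPins (hMν.symm ▸ subset_insert ξ M₀)
        rw [hMν] at heq
        exact hξM (heq ▸ mem_insert ξ M₀)
      omega

end
end
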